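/- arXiv:1611.07305 — 2 statements merged into one kernel-verified Lean document; each statement's English description precedes it below -/
import Mathlib

section
/- For any vectors v_1, ..., v_n ∈ ℝ^d, the maximum of the vector-partition objective ∑_{B ∈ P} ‖S_B‖² over all partitions P of {1, ..., n} is attained by a partition having at most d + 1 nonempty blocks. -/
open Finset

lemma card_le_of_pairwise_neg {d : ℕ} (s : Finset (EuclideanSpace ℝ (Fin d)))
    (h : ∀ u ∈ s, ∀ w ∈ s, u ≠ w → (inner ℝ u w : ℝ) < 0) : s.card ≤ d + 1 := by
  classical
  obtain rfl | ⟨u0, hu0⟩ := s.eq_empty_or_nonempty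
  · simp
  set t := s.erase u0 with ht
  have hts : t ⊆ s := Finset.erase_subset _ _
  have hli : LinearIndependent ℝ (fun x => x : t → EuclideanSpace ℝ (Fin d)) := by
    rw [linearIndependent_iff']
    intro s' g hsum i0 hi0
    set P := s'.filter (fun i => 0 < g i) with hPdef
    set N := s'.filter (fun i => g i < 0) with hNdef
    set p := ∑ i ∈ P, g i • (i : EuclideanSpace ℝ (Fin d)) with hpdef
    set q := ∑ j ∈ N, (-g j) • (j : EuclideanSpace ℝ (Fin d)) with hqdef
    have hpq : p = q := by
      have hsplit : ∑ i ∈ s', g i • (i : EuclideanSpace ℝ (Fin d)) = p - q := by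
        rw [hpdef, hqdef, hPdef, hNdef, Finset.sum_filter, Finset.sum_filter,
          ← Finset.sum_sub_distrib]
        refine Finset.sum_congr rfl fun i _ => ?_
        rcases lt_trichotomy (g i) 0 with hg | hg | hg
        · simp [hg, not_lt.mpr hg.le, hg.not_gt]
        · simp [hg]
        · simp [hg, not_lt.mpr hg.le, hg.not_gt]
      rw [hsum] at hsplit
      exact sub_eq_zero.mp hsplit.symm
    -- key negativity facts
    have hneg : ∀ i : {x // x ∈ t}, ∀ j : {x // x ∈ t}, i ≠ j →
        (inner ℝ (i : EuclideanSpace ℝ (Fin d)) (j : EuclideanSpace ℝ (Fin d)) : ℝ) < 0 := by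
      intro i j hij
      exact h i (hts i.2) j (hts j.2) (fun e => hij (Subtype.ext e))
    have hinpq : (inner ℝ p q : ℝ) ≤ 0 := by
      rw [hpdef, hqdef, sum_inner]
      refine Finset.sum_nonpos fun i hiP => ?_
      rw [inner_sum]
      refine Finset.sum_nonpos fun j hjN => ?_
      rw [real_inner_smul_left, real_inner_smul_right]
      have hgi : 0 < g i := (Finset.mem_filter.mp hiP).2
      have hgj : g j < 0 := (Finset.mem_filter.mp hjN).2
      have hij : i ≠ j := fun e => by rw [e] at hgi; exact absurd hgj (not_lt.mpr hgi.le)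
      have h1 : 0 < -g j := by linarith
      exact le_of_lt (mul_neg_of_pos_of_neg hgi (mul_neg_of_pos_of_neg h1 (hneg i j hij)))
    have hp0 : p = 0 := by
      have : (inner ℝ p p : ℝ) ≤ 0 := by rw [hpq] at hinpq ⊢; exact hinpq
      exact real_inner_self_nonpos.mp this
    have hinteru0 : ∀ i : {x // x ∈ t},
        (inner ℝ (i : EuclideanSpace ℝ (Fin d)) u0 : ℝ) < 0 := by
      intro i
      have hine : (i : EuclideanSpace ℝ (Fin d)) ≠ u0 := Finset.ne_of_mem_erase i.2
      exact h i (hts i.2) u0 hu0 hine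
    have hPempty : P = ∅ := by
      by_contra hne
      obtain ⟨i, hi⟩ := Finset.nonempty_of_ne_empty hne
      have hlt : (inner ℝ p u0 : ℝ) < 0 := by
        rw [hpdef, sum_inner]
        refine Finset.sum_neg (fun j hj => ?_) ⟨i, hi⟩
        rw [real_inner_smul_left]
        have hgj : 0 < g j := (Finset.mem_filter.mp hj).2
        exact mul_neg_of_pos_of_neg hgj (hinteru0 j)
      rw [hp0, inner_zero_left] at hlt
      exact absurd hlt (lt_irrefl 0)
    have hNempty : N = ∅ := by
      by_contra hne
      obtain ⟨i, hi⟩ := Finset.nonempty_of_ne_empty hne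
      have hlt : (inner ℝ q u0 : ℝ) < 0 := by
        rw [hqdef, sum_inner]
        refine Finset.sum_neg (fun j hj => ?_) ⟨i, hi⟩
        rw [real_inner_smul_left]
        have hgj : g j < 0 := (Finset.mem_filter.mp hj).2
        exact mul_neg_of_pos_of_neg (by linarith) (hinteru0 j)
      rw [← hpq, hp0, inner_zero_left] at hlt
      exact absurd hlt (lt_irrefl 0)
    by_contra hg0
    rcases lt_trichotomy (g i0) 0 with hg | hg | hg
    · have : i0 ∈ N := Finset.mem_filter.mpr ⟨hi0, hg⟩
      rw [hNempty] at this; exact absurd this (Finset.notMem_empty _)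
    · exact hg0 hg
    · have : i0 ∈ P := Finset.mem_filter.mpr ⟨hi0, hg⟩
      rw [hPempty] at this; exact absurd this (Finset.notMem_empty _)
  have hcard : t.card ≤ d := by
    have := hli.finset_card_le_finrank
    simpa [finrank_euclideanSpace_fin] using this
  have : s.card = t.card + 1 := by
    rw [ht, Finset.card_erase_of_mem hu0]
    have : 1 ≤ s.card := Finset.card_pos.mpr ⟨u0, hu0⟩
    omega
  omega

/-- The vector-partition objective: sum over blocks of the squared norm of the
block's sum point `S_B = ∑ i ∈ B, v i`. -/
noncomputable def vpObj {n d : ℕ} (v : Fin n → EuclideanSpace ℝ (Fin d))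
    (P : Finpartition (Finset.univ : Finset (Fin n))) : ℝ :=
  ∑ B ∈ P.parts, ‖∑ i ∈ B, v i‖ ^ 2

lemma merge_lemma {n d : ℕ} (v : Fin n → EuclideanSpace ℝ (Fin d))
    (P : Finpartition (Finset.univ : Finset (Fin n))) {B C : Finset (Fin n)}
    (hB : B ∈ P.parts) (hC : C ∈ P.parts) (hBC : B ≠ C)
    (hin : 0 ≤ (inner ℝ (∑ i ∈ B, v i) (∑ i ∈ C, v i) : ℝ)) :
    ∃ Q : Finpartition (Finset.univ : Finset (Fin n)),
      vpObj v P ≤ vpObj v Q ∧ Q.parts.card < P.parts.card := by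
  classical
  set R := (P.parts.erase B).erase C with hR
  have hRsub : R ⊆ P.parts := (Finset.erase_subset _ _).trans (Finset.erase_subset _ _)
  have hCmem : C ∈ P.parts.erase B := Finset.mem_erase.mpr ⟨Ne.symm hBC, hC⟩
  have hparts : P.parts = insert B (insert C R) := by
    rw [hR, Finset.insert_erase hCmem, Finset.insert_erase hB]
  have hBR : B ∉ R := fun hmem => (Finset.mem_erase.mp (Finset.mem_of_mem_erase hmem)).1 rfl
  have hCR : C ∉ R := fun hmem => (Finset.mem_erase.mp hmem).1 rfl
  have hBC' : Disjoint B C := P.disjoint hB hC hBC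
  have hdisjR : ∀ D ∈ R, Disjoint (B ∪ C) D := by
    intro D hD
    have hDparts : D ∈ P.parts := hRsub hD
    have hDB : D ≠ B := (Finset.mem_erase.mp (Finset.mem_of_mem_erase hD)).1
    have hDC : D ≠ C := (Finset.mem_erase.mp hD).1
    exact Finset.disjoint_union_left.mpr
      ⟨P.disjoint hB hDparts (Ne.symm hDB), P.disjoint hC hDparts (Ne.symm hDC)⟩
  have hBCR : B ∪ C ∉ R := by
    intro hmem
    have := hdisjR _ hmem
    have hemp : B ∪ C = ∅ := (Finset.disjoint_self_iff_empty _).mp this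
    have hBne : B.Nonempty := P.nonempty_of_mem_parts hB
    rw [Finset.union_eq_empty] at hemp
    exact hBne.ne_empty hemp.1
  refine ⟨⟨insert (B ∪ C) R, ?_, ?_, ?_⟩, ?_, ?_⟩
  · -- supIndep
    rw [Finset.supIndep_iff_pairwiseDisjoint]
    rw [Finset.coe_insert]
    refine Set.PairwiseDisjoint.insert ?_ ?_
    · exact (P.disjoint).subset (by exact_mod_cast hRsub)
    · intro D hD _
      exact hdisjR D hD
  · -- sup = univ
    have hsupP := P.sup_parts
    rw [hparts] at hsupP
    rw [Finset.sup_insert, ← hsupP, Finset.sup_insert, Finset.sup_insert]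
    simp only [id]
    rw [← Finset.sup_eq_union, sup_assoc]
  · -- ⊥ ∉
    intro hmem
    rcases Finset.mem_insert.mp hmem with hmem | hmem
    · have hBne : B.Nonempty := P.nonempty_of_mem_parts hB
      have : B ∪ C = (∅ : Finset (Fin n)) := hmem.symm
      simp [Finset.union_eq_empty] at this
      exact hBne.ne_empty this.1
    · exact P.bot_notMem (hRsub hmem)
  · -- objective inequality
    show vpObj v P ≤ ∑ D ∈ insert (B ∪ C) R, ‖∑ i ∈ D, v i‖ ^ 2
    rw [Finset.sum_insert hBCR, Finset.sum_union hBC']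
    rw [vpObj, hparts, Finset.sum_insert (by simp [hBR, hBC]),
      Finset.sum_insert hCR]
    have := norm_add_sq_real (∑ i ∈ B, v i) (∑ i ∈ C, v i)
    linarith
  · -- card
    show (insert (B ∪ C) R).card < P.parts.card
    have h1 : P.parts.card = R.card + 2 := by
      rw [hparts, Finset.card_insert_of_notMem (by simp [hBR, hBC]),
        Finset.card_insert_of_notMem hCR]
    have := Finset.card_insert_le (B ∪ C) R
    omega


/-- The maximum of the vector-partition objective is attained by a partition with
at most `d + 1` (nonempty) blocks. -/
theorem exists_max_partition_card_le {n d : ℕ} (v : Fin n → EuclideanSpace ℝ (Fin d)) :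
    ∃ P : Finpartition (Finset.univ : Finset (Fin n)),
      (∀ Q : Finpartition (Finset.univ : Finset (Fin n)), vpObj v Q ≤ vpObj v P) ∧
      P.parts.card ≤ d + 1 := by
  classical
  have hne : Nonempty (Finpartition (Finset.univ : Finset (Fin n))) := ⟨⊤⟩
  obtain ⟨P0, hP0⟩ := Finite.exists_max (vpObj v)
  set T : Finset (Finpartition (Finset.univ : Finset (Fin n))) :=
    Finset.univ.filter (fun P => ∀ Q, vpObj v Q ≤ vpObj v P) with hTdef
  have hT : T.Nonempty := ⟨P0, by simp [hTdef, hP0]⟩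
  obtain ⟨P, hPT, hPmin⟩ := Finset.exists_min_image T (fun P => P.parts.card) hT
  have hPmax : ∀ Q, vpObj v Q ≤ vpObj v P := by
    have := Finset.mem_filter.mp hPT
    exact this.2
  refine ⟨P, hPmax, ?_⟩
  have hneg : ∀ B ∈ P.parts, ∀ C ∈ P.parts, B ≠ C →
      (inner ℝ (∑ i ∈ B, v i) (∑ i ∈ C, v i) : ℝ) < 0 := by
    intro B hB C hC hBC
    by_contra hge
    push_neg at hge
    obtain ⟨Q, hQobj, hQcard⟩ := merge_lemma v P hB hC hBC hge
    have hQmax : ∀ Q' , vpObj v Q' ≤ vpObj v Q := fun Q' => le_trans (hPmax Q') hQobj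
    have hQT : Q ∈ T := Finset.mem_filter.mpr ⟨Finset.mem_univ _, hQmax⟩
    have := hPmin Q hQT
    omega
  set f : Finset (Fin n) → EuclideanSpace ℝ (Fin d) := fun B => ∑ i ∈ B, v i with hf
  have hinj : Set.InjOn f P.parts := by
    intro B hB C hC hfe
    by_contra hne'
    have hlt := hneg B hB C hC hne'
    rw [show (∑ i ∈ B, v i) = f B from rfl, show (∑ i ∈ C, v i) = f C from rfl, hfe] at hlt
    exact absurd hlt (not_lt.mpr real_inner_self_nonneg)
  have hcard : (P.parts.image f).card = P.parts.card := Finset.card_image_of_injOn hinj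
  have hkey : (P.parts.image f).card ≤ d + 1 := by
    refine card_le_of_pairwise_neg _ ?_
    intro u hu w hw huw
    obtain ⟨B, hB, rfl⟩ := Finset.mem_image.mp hu
    obtain ⟨C, hC, rfl⟩ := Finset.mem_image.mp hw
    have hBC : B ≠ C := fun e => huw (by rw [e])
    exact hneg B hB C hC hBC
  omega
end

section
/- Let v_1, ..., v_n ∈ ℝ^d and set A_ij = ⟨v_i, v_j⟩. Then twice the maximum over all partitions P of {1, ..., n} of the correlation clustering objective ∑_{i<j, i and j in the same block of P} A_ij, plus ∑_{i=1}^n ‖v_i‖², equals the maximum over all partitions of {1, ..., n} into at most d + 1 blocks of the vector-partition objective ∑_{B} ‖S_B‖². In particular, a partition maximizes the correlation clustering objective if and only if it maximizes the vector-partition objective. -/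
/-!
Expanding `‖S_B‖² = ∑_{i ∈ B} ‖v_i‖² + 2 ∑_{i < j in B} ⟪v_i, v_j⟫` shows that, for every
partition, the vector-partition objective is twice the correlation clustering objective plus
`∑ ‖v_i‖²`. The bound on the number of blocks costs nothing: vectors of `ℝ^d` with pairwise
negative inner products number at most `d + 1` (all but one of them are linearly independent),
so a partition with more than `d + 1` blocks has two blocks whose sum points have nonnegative
inner product, and merging them does not decrease the vector-partition objective.
-/

open Finset
open scoped RealInnerProductSpace

/-- The correlation clustering objective: sum of `A i j = ⟪v i, v j⟫` over pairs
`i < j` lying in the same block of the partition. -/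
noncomputable def ccObj {n d : ℕ} (v : Fin n → EuclideanSpace ℝ (Fin d))
    (P : Finpartition (Finset.univ : Finset (Fin n))) : ℝ :=
  ∑ p ∈ Finset.univ.filter
      (fun p : Fin n × Fin n => p.1 < p.2 ∧ ∃ B ∈ P.parts, p.1 ∈ B ∧ p.2 ∈ B),
    ⟪v p.1, v p.2⟫

theorem Finset.sum_sum_eq_sum_add_two_nsmul_sum_lt {ι M : Type*} [LinearOrder ι]
    [AddCommMonoid M] (s : Finset ι) (F : ι → ι → M) (hF : ∀ i j, F i j = F j i) :
    ∑ i ∈ s, ∑ j ∈ s, F i j = ∑ i ∈ s, F i i + 2 • ∑ p ∈ s ×ˢ s with p.1 < p.2, F p.1 p.2 := by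
  rw [← sum_product', ← sum_filter_add_sum_filter_not _ (fun p => p.1 < p.2),
    ← sum_filter_add_sum_filter_not ((s ×ˢ s).filter fun p => ¬p.1 < p.2) (fun p => p.2 < p.1),
    filter_filter, filter_filter]
  have hgt : ∑ p ∈ s ×ˢ s with ¬p.1 < p.2 ∧ p.2 < p.1, F p.1 p.2 =
      ∑ p ∈ s ×ˢ s with p.1 < p.2, F p.1 p.2 :=
    sum_nbij' Prod.swap Prod.swap (by simp +contextual [and_comm])
      (by simp +contextual [and_comm, le_of_lt]) (by simp) (by simp) (fun p _ => hF _ _)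
  have hdiag : ∑ p ∈ s ×ˢ s with ¬p.1 < p.2 ∧ ¬p.2 < p.1, F p.1 p.2 = ∑ i ∈ s, F i i :=
    sum_nbij' Prod.fst (fun i => (i, i)) (by simp +contextual) (by simp)
      (by simp +contextual [le_antisymm_iff]) (by simp) fun p hp => by
        simp only [mem_filter, not_lt] at hp
        rw [le_antisymm hp.2.1 hp.2.2]
  rw [hgt, hdiag, two_nsmul]
  abel

theorem norm_sum_sq_eq_sum_norm_sq_add_two_mul {ι E : Type*} [LinearOrder ι]
    [NormedAddCommGroup E] [InnerProductSpace ℝ E] (s : Finset ι) (v : ι → E) :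
    ‖∑ i ∈ s, v i‖ ^ 2 =
      ∑ i ∈ s, ‖v i‖ ^ 2 + 2 * ∑ p ∈ s ×ˢ s with p.1 < p.2, ⟪v p.1, v p.2⟫ := by
  simp_rw [← real_inner_self_eq_norm_sq, sum_inner, inner_sum]
  rw [sum_sum_eq_sum_add_two_nsmul_sum_lt s _ fun i j => real_inner_comm _ _, nsmul_eq_mul,
    Nat.cast_ofNat]

theorem vpObj_eq_two_mul_ccObj_add {n d : ℕ} (v : Fin n → EuclideanSpace ℝ (Fin d))
    (P : Finpartition (univ : Finset (Fin n))) :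
    vpObj v P = 2 * ccObj v P + ∑ i, ‖v i‖ ^ 2 := by
  have hdiag : ∑ B ∈ P.parts, ∑ i ∈ B, ‖v i‖ ^ 2 = ∑ i, ‖v i‖ ^ 2 := by
    have h := sum_biUnion P.disjoint (f := fun i => ‖v i‖ ^ 2)
    rw [P.biUnion_parts] at h
    exact h.symm
  have hpairs : ∑ B ∈ P.parts, ∑ p ∈ B ×ˢ B with p.1 < p.2, ⟪v p.1, v p.2⟫ = ccObj v P := by
    rw [ccObj, ← sum_biUnion]
    · congr 1
      ext p
      simp only [mem_biUnion, mem_filter, mem_product, mem_univ, true_and]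
      tauto
    · intro B hB B' hB' hne
      exact (disjoint_product.2 (Or.inl (P.disjoint hB hB' hne))).mono
        (filter_subset _ _) (filter_subset _ _)
  simp only [vpObj, norm_sum_sq_eq_sum_norm_sq_add_two_mul, sum_add_distrib, ← mul_sum, hdiag,
    hpairs]
  ring

section PairwiseInnerNonpos

variable {ι E : Type*} [NormedAddCommGroup E] [InnerProductSpace ℝ E] {f : ι → E}

theorem sum_filter_pos_smul_eq_zero_of_pairwise_inner_nonpos
    (hf : Pairwise fun i j => ⟪f i, f j⟫ ≤ 0) {s : Finset ι} {c : ι → ℝ}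
    (hsum : ∑ i ∈ s, c i • f i = 0) : ∑ i ∈ s with 0 < c i, c i • f i = 0 := by
  set u := ∑ i ∈ s with 0 < c i, c i • f i
  have hu : u = ∑ j ∈ s with ¬0 < c j, (-c j) • f j := by
    rw [← sum_filter_add_sum_filter_not s (fun i => 0 < c i)] at hsum
    simp only [neg_smul, sum_neg_distrib]
    exact eq_neg_of_add_eq_zero_left hsum
  -- `⟪u, u⟫` pairs positive with nonpositive coefficients, hence distinct indices
  refine real_inner_self_nonpos.1 ?_
  conv_lhs => arg 2; rw [hu]
  simp only [u, sum_inner, inner_sum, real_inner_smul_left, real_inner_smul_right]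
  refine sum_nonpos fun i hi => sum_nonpos fun j hj => ?_
  rw [mem_filter] at hi hj
  exact mul_nonpos_of_nonneg_of_nonpos hi.2.le <| mul_nonpos_of_nonneg_of_nonpos
    (neg_nonneg.2 (not_lt.1 hj.2)) (hf fun hij => hj.2 (hij ▸ hi.2))

theorem nonpos_of_sum_smul_eq_zero_of_pairwise_inner_nonpos
    (hf : Pairwise fun i j => ⟪f i, f j⟫ ≤ 0) {x : E} (hx : ∀ i, ⟪f i, x⟫ < 0)
    {s : Finset ι} {c : ι → ℝ} (hsum : ∑ i ∈ s, c i • f i = 0) : ∀ i ∈ s, c i ≤ 0 := by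
  intro i hi
  by_contra! hci
  have hneg : ⟪∑ j ∈ s with 0 < c j, c j • f j, x⟫ < 0 := by
    simp only [sum_inner, real_inner_smul_left]
    exact sum_neg (fun j hj => mul_neg_of_pos_of_neg (mem_filter.1 hj).2 (hx j))
      ⟨i, mem_filter.2 ⟨hi, hci⟩⟩
  simp [sum_filter_pos_smul_eq_zero_of_pairwise_inner_nonpos hf hsum] at hneg

theorem linearIndependent_of_pairwise_inner_nonpos (hf : Pairwise fun i j => ⟪f i, f j⟫ ≤ 0)
    {x : E} (hx : ∀ i, ⟪f i, x⟫ < 0) : LinearIndependent ℝ f := by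
  refine linearIndependent_iff'.2 fun s c hsum i hi => le_antisymm
    (nonpos_of_sum_smul_eq_zero_of_pairwise_inner_nonpos hf hx hsum i hi) ?_
  have hsum' : ∑ j ∈ s, (-c j) • f j = 0 := by simp [hsum]
  simpa using nonpos_of_sum_smul_eq_zero_of_pairwise_inner_nonpos hf hx hsum' i hi

theorem card_le_finrank_add_one_of_pairwise_inner_neg [Fintype ι] [FiniteDimensional ℝ E]
    (hf : Pairwise fun i j => ⟪f i, f j⟫ < 0) : Fintype.card ι ≤ Module.finrank ℝ E + 1 := by
  classical
  rcases isEmpty_or_nonempty ι with _ | ⟨⟨i₀⟩⟩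
  · simp
  have hli : LinearIndependent ℝ fun i : {i // i ≠ i₀} => f i :=
    linearIndependent_of_pairwise_inner_nonpos (fun i j hij => (hf (Subtype.coe_ne_coe.2 hij)).le)
      (fun i => hf i.2)
  have := hli.fintype_card_le_finrank
  rw [Fintype.card_subtype_compl, Fintype.card_subtype_eq] at this
  omega

end PairwiseInnerNonpos

namespace Finpartition

variable {α : Type*} [DistribLattice α] [OrderBot α] [DecidableEq α] {a b₁ b₂ : α}
  (P : Finpartition a)

theorem disjoint_sup_erase_erase_sup (h₁ : b₁ ∈ P.parts) (h₂ : b₂ ∈ P.parts) :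
    Disjoint (((P.parts.erase b₁).erase b₂).sup id) (b₁ ⊔ b₂) := by
  refine Finset.disjoint_sup_left.2 fun b hb => disjoint_sup_right.2 ⟨?_, ?_⟩
  · exact P.disjoint (mem_of_mem_erase (mem_of_mem_erase hb)) h₁
      (ne_of_mem_erase (mem_of_mem_erase hb))
  · exact P.disjoint (mem_of_mem_erase (mem_of_mem_erase hb)) h₂ (ne_of_mem_erase hb)

theorem sup_erase_erase_sup (h₁ : b₁ ∈ P.parts) (h₂ : b₂ ∈ P.parts) (hne : b₁ ≠ b₂) :
    ((P.parts.erase b₁).erase b₂).sup id ⊔ (b₁ ⊔ b₂) = a := by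
  conv_rhs => rw [← P.sup_parts, ← insert_erase h₁, ← insert_erase (mem_erase.2 ⟨hne.symm, h₂⟩)]
  rw [sup_insert, sup_insert, id, id]
  ac_rfl

variable (h₁ : b₁ ∈ P.parts) (h₂ : b₂ ∈ P.parts) (hne : b₁ ≠ b₂)

def mergeParts : Finpartition a :=
  (P.ofSubset ((erase_subset _ _).trans (erase_subset _ _)) rfl).extend
    (fun h => P.ne_bot h₁ (sup_eq_bot_iff.1 h).1) (P.disjoint_sup_erase_erase_sup h₁ h₂)
    (P.sup_erase_erase_sup h₁ h₂ hne)

theorem card_mergeParts_add_one : #(P.mergeParts h₁ h₂ hne).parts + 1 = #P.parts := by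
  rw [mergeParts, card_extend, ofSubset_parts, card_erase_add_one (mem_erase.2 ⟨hne.symm, h₂⟩),
    card_erase_add_one h₁]

theorem sum_mergeParts_add {M : Type*} [AddCommMonoid M] (g : α → M) :
    ∑ b ∈ (P.mergeParts h₁ h₂ hne).parts, g b + (g b₁ + g b₂) =
      g (b₁ ⊔ b₂) + ∑ b ∈ P.parts, g b := by
  have hnot : b₁ ⊔ b₂ ∉ (P.parts.erase b₁).erase b₂ := fun h =>
    P.ne_bot h₁ <| disjoint_self.1 <|
      ((P.disjoint_sup_erase_erase_sup h₁ h₂).mono_left (le_sup h)).mono le_sup_left le_sup_left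
  rw [mergeParts, extend_parts, ofSubset_parts, sum_insert hnot, ← add_sum_erase _ _ h₁,
    ← add_sum_erase _ _ (mem_erase.2 ⟨hne.symm, h₂⟩)]
  abel

end Finpartition

section VectorPartition

variable {n d : ℕ} (v : Fin n → EuclideanSpace ℝ (Fin d))

theorem exists_inner_sum_nonneg_of_card_parts_gt (P : Finpartition (univ : Finset (Fin n)))
    (hP : d + 1 < #P.parts) :
    ∃ B₁ ∈ P.parts, ∃ B₂ ∈ P.parts, B₁ ≠ B₂ ∧ 0 ≤ ⟪∑ i ∈ B₁, v i, ∑ i ∈ B₂, v i⟫ := by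
  by_contra! h
  have := card_le_finrank_add_one_of_pairwise_inner_neg (f := fun B : P.parts => ∑ i ∈ B.1, v i)
    fun B₁ B₂ hne => h B₁ B₁.2 B₂ B₂.2 (Subtype.coe_ne_coe.2 hne)
  rw [Fintype.card_coe, finrank_euclideanSpace_fin] at this
  omega

theorem exists_card_parts_lt_vpObj_le (P : Finpartition (univ : Finset (Fin n)))
    (hP : d + 1 < #P.parts) :
    ∃ Q : Finpartition (univ : Finset (Fin n)), #Q.parts < #P.parts ∧ vpObj v P ≤ vpObj v Q := by
  obtain ⟨B₁, h₁, B₂, h₂, hne, hinner⟩ := exists_inner_sum_nonneg_of_card_parts_gt v P hP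
  refine ⟨P.mergeParts h₁ h₂ hne, by have := P.card_mergeParts_add_one h₁ h₂ hne; omega, ?_⟩
  have hsum := P.sum_mergeParts_add h₁ h₂ hne fun B => ‖∑ i ∈ B, v i‖ ^ 2
  rw [sup_eq_union, sum_union (s₁ := B₁) (s₂ := B₂) (P.disjoint h₁ h₂ hne),
    norm_add_sq_real] at hsum
  rw [vpObj, vpObj]
  linarith

theorem exists_card_parts_le_vpObj_le (P : Finpartition (univ : Finset (Fin n))) :
    ∃ Q : Finpartition (univ : Finset (Fin n)), #Q.parts ≤ d + 1 ∧ vpObj v P ≤ vpObj v Q := by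
  induction hk : #P.parts using Nat.strong_induction_on generalizing P with
  | _ k ih =>
    by_cases hP : #P.parts ≤ d + 1
    · exact ⟨P, hP, le_rfl⟩
    obtain ⟨Q, hQ, hPQ⟩ := exists_card_parts_lt_vpObj_le v P (by omega)
    obtain ⟨R, hR, hQR⟩ := ih _ (hk ▸ hQ) Q rfl
    exact ⟨R, hR, hPQ.trans hQR⟩

end VectorPartition

/-- Twice the maximum correlation clustering objective plus `∑ i, ‖v i‖²` equals the
maximum of the vector-partition objective over partitions into at most `d + 1` blocks;
in particular a partition maximizes one objective iff it maximizes the other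
(Theorem 1 of the paper). -/
theorem two_mul_max_ccObj_add_eq_max_vpObj {n d : ℕ}
    (v : Fin n → EuclideanSpace ℝ (Fin d)) (m₁ m₂ : ℝ)
    (h₁ : IsGreatest (Set.range (ccObj v)) m₁)
    (h₂ : IsGreatest (vpObj v ''
      {P : Finpartition (Finset.univ : Finset (Fin n)) | P.parts.card ≤ d + 1}) m₂) :
    2 * m₁ + ∑ i, ‖v i‖ ^ 2 = m₂ ∧
    ∀ P : Finpartition (Finset.univ : Finset (Fin n)),
      (∀ Q : Finpartition (Finset.univ : Finset (Fin n)), ccObj v Q ≤ ccObj v P) ↔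
      (∀ Q : Finpartition (Finset.univ : Finset (Fin n)), vpObj v Q ≤ vpObj v P) := by
  have hvp := vpObj_eq_two_mul_ccObj_add v
  refine ⟨le_antisymm ?_ ?_, fun P => forall_congr' fun Q => ?_⟩
  · obtain ⟨P, rfl⟩ := h₁.1
    obtain ⟨Q, hQ, hPQ⟩ := exists_card_parts_le_vpObj_le v P
    have := h₂.2 ⟨Q, hQ, rfl⟩
    linarith [hvp P]
  · obtain ⟨P, -, rfl⟩ := h₂.1
    have := h₁.2 ⟨P, rfl⟩
    linarith [hvp P]
  · rw [hvp, hvp]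
    constructor <;> intro h <;> linarith
end
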